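/- The 3×3 complex matrix C with rows [i, −i, 0], [−1, 2, −1], and [0, i, −i] satisfies: (a) its characteristic polynomial is X·(X − 1)², so the eigenvalue 1 has algebraic multiplicity 2; (b) the kernel of C − I is one-dimensional, so the eigenvalue 1 has geometric multiplicity 1; and consequently (c) C is not diagonalisable: there exist no invertible 3×3 complex matrix P and diagonal 3×3 complex matrix D with C = P·D·P⁻¹. -/
import Mathlib


open Complex Matrix Polynomial

/-- The generalised capacitance matrix of the trimer at the exceptional point `θ = π/4`. -/
noncomputable def Cep : Matrix (Fin 3) (Fin 3) ℂ :=
  !![Complex.I, -Complex.I, 0;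
     -1, 2, -1;
     0, Complex.I, -Complex.I]

lemma card_aux (w : Fin 3 → ℂ) (hval : ∀ i, w i = 0 ∨ w i = 1)
    (htr : w 0 + w 1 + w 2 = 2) : Fintype.card {i // w i - 1 ≠ 0} ≤ 1 := by
  rw [Fintype.card_le_one_iff]
  rintro ⟨i, hi⟩ ⟨j, hj⟩
  have hi' : w i = 0 := by
    rcases hval i with h | h
    · exact h
    · exact absurd (by rw [h]; ring) hi
  have hj' : w j = 0 := by
    rcases hval j with h | h
    · exact h
    · exact absurd (by rw [h]; ring) hj
  apply Subtype.ext
  show i = j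
  rcases hval 0 with h0 | h0 <;> rcases hval 1 with h1 | h1 <;> rcases hval 2 with h2 | h2 <;>
    rw [h0, h1, h2] at htr <;> norm_num at htr <;>
    fin_cases i <;> fin_cases j <;> simp_all

lemma charpoly_aux : Cep.charpoly = X * (X - 1) ^ 2 := by
  have hI : (Polynomial.C Complex.I) * (Polynomial.C Complex.I) = -1 := by
    rw [← C_mul, Complex.I_mul_I]; simp
  have h2 : (Polynomial.C (2:ℂ)) = 2 := by simp [map_ofNat]
  rw [Matrix.charpoly, Matrix.det_fin_three]
  simp [charmatrix_apply, Cep, Matrix.diagonal]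
  rw [h2]; linear_combination (-(X:ℂ[X])) * hI

lemma finrank_aux : Module.finrank ℂ (LinearMap.ker (Matrix.toLin' (Cep - 1))) = 1 := by
  have hker : LinearMap.ker (Matrix.toLin' (Cep - 1)) =
      Submodule.span ℂ {![1, 1 + Complex.I, Complex.I]} := by
    apply le_antisymm
    · intro x hx
      have hx' : (Cep - 1) *ᵥ x = 0 := by
        rw [LinearMap.mem_ker, Matrix.toLin'_apply] at hx; exact hx
      have h0 := congrFun hx' 0
      have h2 := congrFun hx' 2
      simp [Cep, Matrix.mulVec, Matrix.one_apply, Fin.sum_univ_three, dotProduct] at h0 h2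
      rw [Submodule.mem_span_singleton]
      refine ⟨x 0, ?_⟩
      funext i
      fin_cases i <;> simp
      · linear_combination -Complex.I * h0 + (x 0 - x 1) * Complex.I_sq
      · linear_combination ((1-Complex.I)/2) * (h0 + h2) + ((x 0 - x 2)/2) * Complex.I_sq
    · rw [Submodule.span_le, Set.singleton_subset_iff]
      rw [SetLike.mem_coe, LinearMap.mem_ker, Matrix.toLin'_apply]
      funext i
      fin_cases i <;>
        simp [Cep, Matrix.mulVec, Matrix.one_apply, Fin.sum_univ_three, dotProduct]
      · linear_combination (-1 : ℂ) * Complex.I_sq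
      · ring
      · ring
  rw [hker, finrank_span_singleton]
  intro h
  have := congrFun h 0
  simp at this

/-- At the exceptional point: the characteristic polynomial is `X (X-1)²` (algebraic
multiplicity 2 for the eigenvalue 1), the eigenspace of the eigenvalue `1` is one-dimensional
(geometric multiplicity 1), and consequently `Cep` is not diagonalisable. -/
theorem stmt_5 :
    Cep.charpoly = X * (X - 1) ^ 2 ∧
    Module.finrank ℂ (LinearMap.ker (Matrix.toLin' (Cep - 1))) = 1 ∧
    ¬ ∃ (P D : Matrix (Fin 3) (Fin 3) ℂ), IsUnit P.det ∧ D.IsDiag ∧ Cep = P * D * P⁻¹ := by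
  refine ⟨charpoly_aux, finrank_aux, ?_⟩
  have ha := charpoly_aux
  have hb := finrank_aux
  rintro ⟨P, D, hP, hD, hC⟩
  have hPP : P * P⁻¹ = 1 := Matrix.mul_nonsing_inv P hP
  have hPP' : P⁻¹ * P = 1 := Matrix.nonsing_inv_mul P hP
  have cancel : ∀ M : Matrix (Fin 3) (Fin 3) ℂ, P⁻¹ * (P * M) = M := fun M => by
    rw [← Matrix.mul_assoc, hPP', Matrix.one_mul]
  have cancel' : ∀ M : Matrix (Fin 3) (Fin 3) ℂ, P * (P⁻¹ * M) = M := fun M => by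
    rw [← Matrix.mul_assoc, hPP, Matrix.one_mul]
  have hCH : Cep * (Cep - 1) ^ 2 = 0 := by
    have h := Cep.aeval_self_charpoly
    rw [ha] at h
    simpa [aeval_mul, map_pow, map_sub] using h
  have hDdiag : D = Matrix.diagonal (Matrix.diag D) := (hD.diagonal_diag).symm
  have hsim : Cep - 1 = P * (D - 1) * P⁻¹ := by
    rw [hC, Matrix.mul_sub, Matrix.sub_mul, Matrix.mul_one, hPP]
  have hD0 : D * (D - 1) ^ 2 = 0 := by
    have key : P⁻¹ * (Cep * (Cep - 1) ^ 2) * P = D * (D - 1) ^ 2 := by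
      rw [hsim, hC, pow_two]
      simp only [Matrix.mul_assoc, cancel, cancel']
      rw [hPP', Matrix.mul_one, pow_two]
    rw [← key, hCH, Matrix.mul_zero, Matrix.zero_mul]
  have hval : ∀ i, Matrix.diag D i = 0 ∨ Matrix.diag D i = 1 := by
    intro i
    have h := congrFun (congrFun hD0 i) i
    rw [hDdiag] at h
    rw [pow_two] at h
    simp only [← Matrix.diagonal_one, Matrix.diagonal_sub, Matrix.diagonal_mul_diagonal,
      Matrix.diagonal_apply_eq, Matrix.zero_apply] at h
    have : Matrix.diag D i * (Matrix.diag D i - 1) * (Matrix.diag D i - 1) = 0 := by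
      simpa using h
    rcases mul_eq_zero.mp this with h' | h'
    · rcases mul_eq_zero.mp h' with h'' | h''
      · exact Or.inl h''
      · exact Or.inr (by linear_combination h'')
    · exact Or.inr (by linear_combination h')
  have htr : Matrix.diag D 0 + Matrix.diag D 1 + Matrix.diag D 2 = 2 := by
    have h1 : Cep.trace = 2 := by
      simp [Cep, Matrix.trace, Fin.sum_univ_three, Matrix.diag]
    have h2 : Cep.trace = D.trace := by
      rw [hC, Matrix.trace_mul_cycle, hPP', Matrix.one_mul]
    rw [h1] at h2
    rw [Matrix.trace, Fin.sum_univ_three] at h2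
    exact h2.symm
  have hrank2 : (Cep - 1).rank = 2 := by
    have hrn := LinearMap.finrank_range_add_finrank_ker (Matrix.toLin' (Cep - 1))
    rw [hb] at hrn
    simp only [Module.finrank_pi, Fintype.card_fin] at hrn
    have : (Cep - 1).rank = Module.finrank ℂ (LinearMap.range (Matrix.toLin' (Cep - 1))) := by
      rw [Matrix.rank, Matrix.toLin'_apply']
    omega
  have hrank1 : (D - 1).rank ≤ 1 := by
    have hd1 : D - 1 = Matrix.diagonal (fun i => Matrix.diag D i - 1) := by
      conv_lhs => rw [hDdiag]
      rw [← Matrix.diagonal_one, Matrix.diagonal_sub]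
    rw [hd1, Matrix.rank_diagonal]
    exact card_aux _ hval htr
  have hle : (Cep - 1).rank ≤ 1 := by
    calc (Cep - 1).rank = (P * (D - 1) * P⁻¹).rank := by rw [hsim]
    _ ≤ (P * (D - 1)).rank := Matrix.rank_mul_le_left _ _
    _ ≤ (D - 1).rank := Matrix.rank_mul_le_right _ _
    _ ≤ 1 := hrank1
  omega
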